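/- arXiv:2209.06782 — 7 statements merged into one kernel-verified Lean document; each statement's English description precedes it below -/
import Mathlib

section
/- Let E be an (A,A)-bimodule with bimodule endomorphisms x of E and τ of E² satisfying the nil affine Hecke relations, and let y be a central polynomial variable with y_i = x_i − y and δ = τ∘(y_1) = τ∘(Ex − y) acting on E²[y]. Suppose E² is free over P₂ = k[x₁,x₂]. Given e₁, e₂ ∈ E[y] and ξ ∈ Hom_A(E, E²)[y] with e₁ − e₂ = y₁e′ for some e′ ∈ E[y], the following are equivalent: (i) there exist ξ₁, ξ₂ with ξ = (_⊗e₁) + y₂ξ₁ = δ∘(_⊗e₂) + y₁ξ₂; (ii) there exist ξ₁, ξ′ with ξ = (_⊗e₁) + y₂ξ₁ and ξ₁ = τ∘(_⊗e₂) + y₁ξ′. Moreover when these hold, ξ₁, ξ₂, ξ′ are uniquely determined and ξ₂ = (_⊗e′) + y₂ξ′. -/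
/-- Equivalent characterizations of the `G₂` conditions.  Here `M1` plays the role
of `E[y]` with `y1M = x - y`, `H` plays the role of `Hom_A(E, E²)[y]`,
`ι : M1 → H` is the map `e ↦ (_ ⊗ e)`, and `Y1, Y2, T` are post-composition on `H`
by `x₁ - y`, `x₂ - y`, `τ` respectively; so `δ ∘ (_ ⊗ e) = T (Y1 (ι e))`.
The hypotheses record the nil affine Hecke relation `τ∘y₁ = y₂∘τ + 1`,
injectivity of `Y1, Y2` and the divisibility property (from freeness of `E²`
over `P₂`).  Given `e₁ - e₂ = y₁ e′`, conditions (i) and (ii) on `ξ` are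
equivalent, the auxiliary data is uniquely determined, and `ξ₂ = (_⊗e′) + y₂ξ′`. -/
theorem G2_conditions_equiv {k M1 H : Type*} [Field k]
    [AddCommGroup M1] [Module k M1] [AddCommGroup H] [Module k H]
    (y1M : M1 →ₗ[k] M1) (ι : M1 →ₗ[k] H) (Y1 Y2 T : H →ₗ[k] H)
    (hι : ∀ e, ι (y1M e) = Y1 (ι e))
    (hinj1 : Function.Injective Y1) (hinj2 : Function.Injective Y2)
    (hcomm : ∀ h, Y1 (Y2 h) = Y2 (Y1 h))
    (hdiv : ∀ h : H, (∃ a, h = Y1 a) → (∃ b, h = Y2 b) → ∃ c, h = Y1 (Y2 c))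
    (hT : ∀ h, T (Y1 h) = Y2 (T h) + h)
    (e1 e2 e' : M1) (ξ : H) (he : e1 - e2 = y1M e') :
    ((∃ ξ₁ ξ₂ : H, ξ = ι e1 + Y2 ξ₁ ∧ ξ = T (Y1 (ι e2)) + Y1 ξ₂) ↔
      (∃ ξ₁ ξ' : H, ξ = ι e1 + Y2 ξ₁ ∧ ξ₁ = T (ι e2) + Y1 ξ')) ∧
    (∀ ξ₁ ξ₂ ζ₁ ξ' : H,
      ξ = ι e1 + Y2 ξ₁ → ξ = T (Y1 (ι e2)) + Y1 ξ₂ →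
      ξ = ι e1 + Y2 ζ₁ → ζ₁ = T (ι e2) + Y1 ξ' →
      ξ₁ = ζ₁ ∧ ξ₂ = ι e' + Y2 ξ') := by
  have sub_helper : ∀ {a b c d : H}, c = d → a - b = c - d → a = b := by
    intro a b c d h h2
    have h0 : a - b = 0 := by rw [h2, h, sub_self]
    exact sub_eq_zero.mp h0
  have key : ∀ ξ₁ ξ₂ : H, ξ = ι e1 + Y2 ξ₁ → ξ = T (Y1 (ι e2)) + Y1 ξ₂ →
      Y2 (ξ₁ - T (ι e2)) = Y1 (ξ₂ - ι e') := by
    intro ξ₁ ξ₂ h1 h2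
    have he' : Y1 (ι e') = ι e1 - ι e2 := by rw [← hι, ← he, map_sub]
    have hthis := h1.symm.trans h2
    rw [hT] at hthis
    rw [map_sub, map_sub, he']
    apply sub_helper hthis
    abel
  constructor
  · constructor
    · rintro ⟨ξ₁, ξ₂, h1, h2⟩
      have hk := key ξ₁ ξ₂ h1 h2
      obtain ⟨c, hc⟩ := hdiv (Y2 (ξ₁ - T (ι e2))) ⟨_, hk⟩ ⟨_, rfl⟩
      rw [hcomm] at hc
      refine ⟨ξ₁, c, h1, ?_⟩
      have h5 := hinj2 hc
      apply sub_helper h5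
      abel
    · rintro ⟨ξ₁, ξ', h1, h2⟩
      refine ⟨ξ₁, ι e' + Y2 ξ', h1, ?_⟩
      have he' : Y1 (ι e') = ι e1 - ι e2 := by rw [← hι, ← he, map_sub]
      rw [hT, h1, h2]
      simp only [map_add]
      rw [hcomm, he']
      abel
  · intro ξ₁ ξ₂ ζ₁ ξ' h1 h2 h3 h4
    have hξζ : ξ₁ = ζ₁ := hinj2 (add_left_cancel (h1.symm.trans h3))
    refine ⟨hξζ, ?_⟩
    have hk := key ξ₁ ξ₂ h1 h2
    rw [hξζ, h4] at hk
    have h6 : Y2 (T (ι e2) + Y1 ξ' - T (ι e2)) = Y2 (Y1 ξ') := by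
      congr 1; abel
    rw [h6, ← hcomm] at hk
    have h7 : Y2 ξ' = ξ₂ - ι e' := hinj1 hk
    apply sub_helper h7.symm
    abel
end

section
/- Let (e₁, e₂, ξ) ∈ G₂, i.e., e₁,e₂ ∈ E[y], ξ ∈ Hom_A(E,E²)[y] with e₁ − e₂ = y₁e′, ξ = (_⊗e₁) + y₂ξ₁ = δ(_⊗e₂) + y₁ξ₂ for some e′, ξ₁, ξ₂. Then (ye₁, xe₂, xE∘ξ) ∈ G₂. -/
/-- Closure of `G₂` under `(e₁, e₂, ξ) ↦ (ye₁, xe₂, xE∘ξ)`.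
Here `M` plays the role of `E[y]` with commuting additive endomorphisms
`xM` (mult. by `x`) and `yM` (mult. by `y`), so `y₁ = xM - yM` on `M`;
`S` plays the role of the endomorphism ring of `E²[y]`, with elements
`x1 = Ex`, `x2 = xE`, `τ`, and central `y`, satisfying the nil affine Hecke
relations; `H` (playing `Hom_A(E,E²)[y]`) is a left `S`-module via
post-composition; `ι : M → H` is `e ↦ (_ ⊗ e)`, intertwining `xM` with `x1` and
`yM` with `y`.  Then `δ = τ(x₁ - y)` and membership in `G₂` is preserved. -/
theorem G2_closed_under_xE {S M H : Type*} [Ring S] [AddCommGroup M]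
    [AddCommGroup H] [Module S H]
    (x1 x2 τ y : S)
    (hyc1 : y * x1 = x1 * y) (hyc2 : y * x2 = x2 * y) (hycτ : y * τ = τ * y)
    (hxx : x1 * x2 = x2 * x1) (hττ : τ * τ = 0)
    (h1 : τ * x1 = x2 * τ + 1) (h2 : x1 * τ = τ * x2 + 1)
    (xM yM : M →+ M) (hMc : ∀ m, xM (yM m) = yM (xM m))
    (ι : M →+ H)
    (hιx : ∀ e, ι (xM e) = x1 • ι e) (hιy : ∀ e, ι (yM e) = y • ι e)
    (e1 e2 : M) (ξ : H)
    (hmem : (∃ e', e1 - e2 = xM e' - yM e') ∧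
      (∃ ξ₁, ξ = ι e1 + (x2 - y) • ξ₁) ∧
      (∃ ξ₂, ξ = (τ * (x1 - y)) • ι e2 + (x1 - y) • ξ₂)) :
    (∃ e', yM e1 - xM e2 = xM e' - yM e') ∧
    (∃ ξ₁, x2 • ξ = ι (yM e1) + (x2 - y) • ξ₁) ∧
    (∃ ξ₂, x2 • ξ = (τ * (x1 - y)) • ι (xM e2) + (x1 - y) • ξ₂) := by
  obtain ⟨⟨e', he⟩, ⟨ξ₁, hξ1⟩, ⟨ξ₂, hξ2⟩⟩ := hmem
  refine ⟨⟨xM e' - e1, ?_⟩, ⟨ι e1 + x2 • ξ₁, ?_⟩, ⟨x2 • ξ₂ - ι e2, ?_⟩⟩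
  · have hx : xM e1 - xM e2 = xM (xM e') - xM (yM e') := by
      rw [← map_sub, ← map_sub, he]
    have h0 : yM e1 - xM e2 = (xM e1 - xM e2) + yM e1 - xM e1 := by abel
    rw [h0, hx, map_sub, map_sub, ← hMc e']
    abel
  · have hs : x2 • ι e1 = (x2 - y) • ι e1 + y • ι e1 := by
      rw [← add_smul, sub_add_cancel]
    have hcomm : x2 * (x2 - y) = (x2 - y) * x2 := by
      rw [mul_sub, sub_mul, hyc2]
    rw [hξ1, hιy, smul_add, smul_smul, hcomm, ← smul_smul, hs, smul_add]
    abel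
  · have hx2τ : x2 * τ = τ * x1 - 1 := by rw [h1]; abel
    have hc : x1 * (x1 - y) = (x1 - y) * x1 := by
      rw [mul_sub, sub_mul, hyc1]
    have c1 : x2 * (τ * (x1 - y)) = τ * (x1 - y) * x1 - (x1 - y) := by
      rw [← mul_assoc, hx2τ, sub_mul, one_mul, mul_assoc, hc, ← mul_assoc]
    have c2 : x2 * (x1 - y) = (x1 - y) * x2 := by
      rw [mul_sub, sub_mul, hyc2, hxx]
    rw [hξ2, hιx, smul_add, smul_smul, smul_smul, c1, c2, smul_sub, smul_smul,
      sub_smul, mul_smul, mul_smul, mul_smul (x1 - y) x2 ξ₂]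
    abel
end

section
/- Let (e₁, e₂, ξ) ∈ G₂ with e₁ − e₂ = y₁e′. Then (e′, e′, τ∘ξ) ∈ G₂. Explicitly, using the equivalent characterization ξ = (_⊗e₁) + y₂ξ₁, ξ₁ = τ(_⊗e₂) + y₁ξ′, one has τ∘ξ = (_⊗e′) + y₂(τ(_⊗e′) + y₁τξ′). -/
/-- Closure of `G₂` under `(e₁, e₂, ξ) ↦ (e′, e′, τ∘ξ)`, with the explicit formula
`τ∘ξ = (_⊗e′) + y₂(τ(_⊗e′) + y₁ τ ξ′)`.
Setup as for `G₂`: `M` plays `E[y]` with endomorphisms `xM`, `yM`; `S` plays the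
endomorphism ring of `E²[y]` with `x1 = Ex`, `x2 = xE`, `τ`, central `y`,
satisfying the nil affine Hecke relations; `H` (playing `Hom_A(E,E²)[y]`) is a
left `S`-module by post-composition; `ι` is `e ↦ (_ ⊗ e)`.  We use the
equivalent characterization `ξ = ι e₁ + y₂ ξ₁`, `ξ₁ = τ(ι e₂) + y₁ ξ′`. -/
theorem G2_closed_under_tau {S M H : Type*} [Ring S] [AddCommGroup M]
    [AddCommGroup H] [Module S H]
    (x1 x2 τ y : S)
    (hyc1 : y * x1 = x1 * y) (hyc2 : y * x2 = x2 * y) (hycτ : y * τ = τ * y)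
    (hxx : x1 * x2 = x2 * x1) (hττ : τ * τ = 0)
    (h1 : τ * x1 = x2 * τ + 1) (h2 : x1 * τ = τ * x2 + 1)
    (xM yM : M →+ M) (hMc : ∀ m, xM (yM m) = yM (xM m))
    (ι : M →+ H)
    (hιx : ∀ e, ι (xM e) = x1 • ι e) (hιy : ∀ e, ι (yM e) = y • ι e)
    (e1 e2 e' : M) (ξ ξ₁ ξ' : H)
    (he : e1 - e2 = xM e' - yM e')
    (hξ : ξ = ι e1 + (x2 - y) • ξ₁)
    (hξ₁ : ξ₁ = τ • ι e2 + (x1 - y) • ξ') :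
    ((∃ a, e' - e' = xM a - yM a) ∧
     (∃ ζ₁, τ • ξ = ι e' + (x2 - y) • ζ₁) ∧
     (∃ ζ₂, τ • ξ = (τ * (x1 - y)) • ι e' + (x1 - y) • ζ₂)) ∧
    τ • ξ = ι e' + (x2 - y) • (τ • ι e' + (x1 - y) • (τ • ξ')) := by
  -- Scalar identities
  have hτx2 : τ * x2 = x1 * τ - 1 := by rw [eq_sub_iff_add_eq]; exact h2.symm
  have hA : τ * (x2 - y) = (x1 - y) * τ - 1 := by
    rw [mul_sub, sub_mul, hτx2, ← hycτ]; abel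
  have hB : τ * (x1 - y) = (x2 - y) * τ + 1 := by
    rw [mul_sub, sub_mul, h1, ← hycτ]; abel
  have cx : Commute x1 x2 := hxx
  have cy2 : Commute y x2 := hyc2
  have cy1 : Commute x1 y := hyc1.symm
  have c2 : Commute (x1 - y) x2 := cx.sub_left cy2
  have cy : Commute (x1 - y) y := cy1.sub_left (Commute.refl y)
  have c : Commute (x1 - y) (x2 - y) := c2.sub_right cy
  have hC : (x1 - y) * ((x2 - y) * τ) = (x2 - y) * ((x1 - y) * τ) := by
    rw [← mul_assoc, c.eq, mul_assoc]
  -- ι applied to `he`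
  have hie : ι e1 - ι e2 = (x1 - y) • ι e' := by
    have h := congrArg ι he
    rw [map_sub, map_sub, hιx, hιy] at h
    rw [h, sub_smul]
  -- τ • ξ₁
  have hτξ₁ : τ • ξ₁ = ((x2 - y) * τ) • ξ' + ξ' := by
    rw [hξ₁, smul_add, smul_smul, smul_smul, hττ, zero_smul, hB, add_smul,
      one_smul, zero_add]
  -- main computation
  have step : τ • ξ = (τ • ι e1 - τ • ι e2) + ((x1 - y) * ((x2 - y) * τ)) • ξ' := by
    rw [hξ, smul_add, smul_smul, hA, sub_smul, one_smul, ← smul_smul, hτξ₁,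
      smul_add, hξ₁, smul_smul]
    abel
  have hsub : τ • ι e1 - τ • ι e2 = (τ * (x1 - y)) • ι e' := by
    rw [← smul_sub, hie, smul_smul]
  have key : τ • ξ = ι e' + (x2 - y) • (τ • ι e' + (x1 - y) • (τ • ξ')) := by
    rw [step, hsub, hB, add_smul, one_smul, hC]
    simp only [smul_add, smul_smul]
    abel
  refine ⟨⟨⟨0, by simp⟩, ⟨τ • ι e' + (x1 - y) • (τ • ξ'), key⟩,
    ⟨(x2 - y) • (τ • ξ'), ?_⟩⟩, key⟩
  rw [step, hsub]
  simp only [smul_smul]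
end

section
/- Given (ee₁, ee₂, ee₃) ∈ E²[y]^⊕3 satisfying ee₁ − ee₂ = y₂·ee′, ee₃ − ee₂ = y₁·ee″, and δ(ee₃) − ee₁ = y₁·ee‴, there exists a unique ēe ∈ E²[y] such that τ(ee₃) − ee′ = y₁·ēe and ee‴ − ee″ = y₂·ēe. -/
/-- Existence and uniqueness of `ēe` for a triple `(ee₁, ee₂, ee₃)` satisfying the
`G₃`-type relations.  Here `M` plays the role of `E²[y]`, `y1, y2` are the
operators `x₁ - y, x₂ - y` (injective, commuting, with the UFD divisibility
property coming from freeness of `E²` over `P₂`), `τ` satisfies the nil affine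
Hecke identity `τ ∘ y₁ = y₂ ∘ τ + 1`, and `δ = τ ∘ y₁`. -/
theorem exists_unique_eebar {k M : Type*} [Field k] [AddCommGroup M] [Module k M]
    (y1 y2 τ : M →ₗ[k] M)
    (hinj1 : Function.Injective y1) (hinj2 : Function.Injective y2)
    (hcomm : ∀ m, y1 (y2 m) = y2 (y1 m))
    (hdiv : ∀ m : M, (∃ a, m = y1 a) → (∃ b, m = y2 b) → ∃ c, m = y1 (y2 c))
    (hrel : ∀ m, τ (y1 m) = y2 (τ m) + m)
    (ee1 ee2 ee3 ee' ee'' ee''' : M)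
    (h1 : ee1 - ee2 = y2 ee')
    (h2 : ee3 - ee2 = y1 ee'')
    (h3 : τ (y1 ee3) - ee1 = y1 ee''') :
    ∃! b : M, τ ee3 - ee' = y1 b ∧ ee''' - ee'' = y2 b := by
  have key : y2 (τ ee3 - ee') = y1 (ee''' - ee'') := by
    have h3' : y2 (τ ee3) + ee3 - ee1 = y1 ee''' := by rw [← hrel]; exact h3
    have := h1
    have := h2
    rw [map_sub, map_sub]
    rw [← h1]
    have e3 : y1 ee''' = y2 (τ ee3) + ee3 - ee1 := h3'.symm
    rw [e3, ← h2]
    abel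
  obtain ⟨c, hc⟩ := hdiv (y2 (τ ee3 - ee')) ⟨_, key⟩ ⟨_, rfl⟩
  refine ⟨c, ⟨?_, ?_⟩, ?_⟩
  · apply hinj2
    rw [hc, hcomm]
  · apply hinj1
    rw [← key, hc]
  · rintro b ⟨hb1, -⟩
    apply hinj1
    have : τ ee3 - ee' = y1 c := by apply hinj2; rw [hc, hcomm]
    rw [← hb1, this]
end

section
/- Define endomorphisms on the component G₃ by τ̃₁ : (ee₁, ee₂, ee₃, χ) ↦ (τ(ee₁), −ee″, −ee″, Eτ∘χ) and τ̃₂ : (ee₁, ee₂, ee₃, χ) ↦ (ee′, ee′, τ(ee₃), τE∘χ), where ee′, ee″ are the unique elements with ee₁ − ee₂ = y₂ee′ and ee₃ − ee₂ = y₁ee″. Then τ̃₁∘τ̃₂∘τ̃₁ = τ̃₂∘τ̃₁∘τ̃₂ on G₃. -/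
/-- The braid relation `τ̃₁∘τ̃₂∘τ̃₁ = τ̃₂∘τ̃₁∘τ̃₂` holds on `G₃`.
Setup as for `G₃`: `M` plays `E²[y]` with commuting additive endomorphisms
`ExM`, `xEM`, `τM`, `yM` satisfying the nil affine Hecke relations;
`S` plays the endomorphism ring of `E³[y]` with `x1 = E²x`, `x2 = ExE`,
`x3 = xE²`, `t1 = Eτ`, `t2 = τE`, central `y`, satisfying the nil affine Hecke
relations including the braid relation `t1*t2*t1 = t2*t1*t2`; `H` (playing
`Hom_A(E,E³)[y]`) is a left `S`-module by post-composition and `ι` is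
`ee ↦ (_ ⊗ ee)`; here `y₁ = ExM - yM` and `y₂ = xEM - yM` act injectively on `M`.
With `τ̃₁(ee₁,ee₂,ee₃,χ) = (τ ee₁, -ee″, -ee″, t₁•χ)` (where `ee₃-ee₂ = y₁ee″`)
and `τ̃₂(ee₁,ee₂,ee₃,χ) = (ee′, ee′, τ ee₃, t₂•χ)` (where `ee₁-ee₂ = y₂ee′`),
the two triple composites agree; the witnesses `a, b` arise when computing
`τ̃₁∘τ̃₂∘τ̃₁` and `c, d` when computing `τ̃₂∘τ̃₁∘τ̃₂`. -/
theorem G3_braid_relation {S M H : Type*} [Ring S] [AddCommGroup M]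
    [AddCommGroup H] [Module S H]
    (x1 x2 x3 t1 t2 y : S)
    (hy1 : y * x1 = x1 * y) (hy2 : y * x2 = x2 * y) (hy3 : y * x3 = x3 * y)
    (hyt1 : y * t1 = t1 * y) (hyt2 : y * t2 = t2 * y)
    (hx12 : x1 * x2 = x2 * x1) (hx13 : x1 * x3 = x3 * x1)
    (hx23 : x2 * x3 = x3 * x2)
    (ht1 : t1 * t1 = 0) (ht2 : t2 * t2 = 0)
    (hbraid : t1 * t2 * t1 = t2 * t1 * t2)
    (h1a : t1 * x1 = x2 * t1 + 1) (h1b : x1 * t1 = t1 * x2 + 1)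
    (h2a : t2 * x2 = x3 * t2 + 1) (h2b : x2 * t2 = t2 * x3 + 1)
    (ExM xEM τM yM : M →+ M)
    (hMxx : ∀ m, ExM (xEM m) = xEM (ExM m))
    (hMy1 : ∀ m, yM (ExM m) = ExM (yM m))
    (hMy2 : ∀ m, yM (xEM m) = xEM (yM m))
    (hMyτ : ∀ m, yM (τM m) = τM (yM m))
    (hMττ : ∀ m, τM (τM m) = 0)
    (hMh1 : ∀ m, ExM (τM m) - τM (xEM m) = m)
    (hMh2 : ∀ m, τM (ExM m) - xEM (τM m) = m)
    (hinj1 : Function.Injective (fun m => ExM m - yM m))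
    (hinj2 : Function.Injective (fun m => xEM m - yM m))
    (ι : M →+ H)
    (hι1 : ∀ m, ι (ExM m) = x1 • ι m) (hι2 : ∀ m, ι (xEM m) = x2 • ι m)
    (hιτ : ∀ m, ι (τM m) = t1 • ι m) (hιy : ∀ m, ι (yM m) = y • ι m)
    (ee1 ee2 ee3 : M) (χ : H)
    (hmem : (∃ a, ee1 - ee2 = xEM a - yM a) ∧
      (∃ b, ee3 - ee2 = ExM b - yM b) ∧
      (∃ c, τM (ExM ee3 - yM ee3) - ee1 = ExM c - yM c) ∧
      (∃ χ₁, χ = ι ee1 + (x3 - y) • χ₁) ∧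
      (∃ χ₂, χ = (t2 * (x2 - y)) • ι ee2 + (x2 - y) • χ₂) ∧
      (∃ χ₃, χ = ((t1 * (x1 - y)) * (t2 * (x2 - y))) • ι ee3 + (x1 - y) • χ₃)) :
    ∀ ee' ee'' a b c d : M,
      ee1 - ee2 = xEM ee' - yM ee' →
      ee3 - ee2 = ExM ee'' - yM ee'' →
      τM ee1 + ee'' = xEM a - yM a →
      -(τM ee'') - a = ExM b - yM b →
      τM ee3 - ee' = ExM c - yM c →
      τM ee' + c = xEM d - yM d →
      τM a = d ∧ -b = d ∧ -b = -(τM c) ∧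
      (t1 * t2 * t1) • χ = (t2 * t1 * t2) • χ := by
  obtain ⟨-, -, ⟨e3, he3⟩, -, -, -⟩ := hmem
  intro ee' ee'' a b c d h1 h2 h3 h4 h5 h6
  have τY2 : ∀ m, τM (xEM m - yM m) = ExM (τM m) - yM (τM m) - m := by
    intro m
    simp only [map_sub]
    linear_combination (norm := abel) hMyτ m - hMh1 m
  have τY1 : ∀ m, τM (ExM m - yM m) = xEM (τM m) - yM (τM m) + m := by
    intro m
    simp only [map_sub]
    linear_combination (norm := abel) hMyτ m + hMh2 m
  have ha := congrArg τM h3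
  rw [map_add, hMττ, zero_add, τY2] at ha
  have hA : τM a = -b := by
    apply hinj1
    show ExM (τM a) - yM (τM a) = ExM (-b) - yM (-b)
    simp only [map_neg]
    linear_combination (norm := abel) -ha - h4
  have hc := congrArg τM h5
  rw [map_sub, hMττ, zero_sub, τY1] at hc
  have hB : d = -(τM c) := by
    apply hinj2
    show xEM d - yM d = xEM (-(τM c)) - yM (-(τM c))
    simp only [map_neg]
    linear_combination (norm := abel) -h6 - hc
  have he3' := he3
  rw [τY1] at he3'
  have A1 := congrArg xEM h5
  have A2 := congrArg yM h5
  simp only [map_sub] at A1 A2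
  have hC : e3 = xEM c - yM c + ee'' := by
    apply hinj1
    show ExM e3 - yM e3 =
      ExM (xEM c - yM c + ee'') - yM (xEM c - yM c + ee'')
    simp only [map_add, map_sub]
    linear_combination (norm := abel)
      -he3' + A1 - A2 + h2 - h1 - hMxx c - hMy1 c + hMy2 c
  have hd0 := congrArg τM he3
  rw [map_sub, hMττ, zero_sub, τY1] at hd0
  have hD : -a = τM e3 + c := by
    apply hinj2
    show xEM (-a) - yM (-a) = xEM (τM e3 + c) - yM (τM e3 + c)
    simp only [map_neg, map_add]
    linear_combination (norm := abel) hd0 + h3 + hC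
  have hDfin : τM a = -(τM c) := by
    have h := congrArg τM hD
    rw [map_neg, map_add, hMττ, zero_add] at h
    linear_combination (norm := abel) -h
  refine ⟨hDfin.trans hB.symm, ?_, hA.symm.trans hDfin, by rw [hbraid]⟩
  rw [← hA, hDfin, hB]
end

section
/- Define endomorphisms of G₂ by x̃E : (e₁,e₂,ξ) ↦ (ye₁, xe₂, xE∘ξ), Ex̃ : (e₁,e₂,ξ) ↦ (xe₁, ye₂, Ex∘ξ), and τ̃ : (e₁,e₂,ξ) ↦ (e′, e′, τ∘ξ) where e₁ − e₂ = y₁e′. Then Ex̃∘τ̃ − τ̃∘x̃E = Id and τ̃∘Ex̃ − x̃E∘τ̃ = Id on G₂. -/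
/-- The nil affine Hecke relations `Ex̃∘τ̃ - τ̃∘x̃E = Id` and `τ̃∘Ex̃ - x̃E∘τ̃ = Id` hold
on `G₂`.  Setup as for `G₂`: `M` plays `E[y]` with endomorphisms `xM`, `yM`
(`y₁ = xM - yM` acts injectively so the witnesses `e′` are unique); `S` plays the
endomorphism ring of `E²[y]` with `x1 = Ex`, `x2 = xE`, `τ`, central `y`,
satisfying the nil affine Hecke relations; `H` (playing `Hom_A(E,E²)[y]`) is a
left `S`-module by post-composition; `ι` is `e ↦ (_ ⊗ e)`.
Here `x̃E(e₁,e₂,ξ) = (ye₁, xe₂, x₂•ξ)`, `Ex̃(e₁,e₂,ξ) = (xe₁, ye₂, x₁•ξ)` and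
`τ̃(e₁,e₂,ξ) = (e′, e′, τ•ξ)` where `e₁ - e₂ = y₁e′`; the conclusion states the
componentwise identities, with `e''`, `e'''` the witnesses appearing after
applying `x̃E` resp. `Ex̃`. -/
theorem G2_hecke_relations {S M H : Type*} [Ring S] [AddCommGroup M]
    [AddCommGroup H] [Module S H]
    (x1 x2 τ y : S)
    (hyc1 : y * x1 = x1 * y) (hyc2 : y * x2 = x2 * y) (hycτ : y * τ = τ * y)
    (hxx : x1 * x2 = x2 * x1) (hττ : τ * τ = 0)
    (h1 : τ * x1 = x2 * τ + 1) (h2 : x1 * τ = τ * x2 + 1)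
    (xM yM : M →+ M) (hMc : ∀ m, xM (yM m) = yM (xM m))
    (hinjM : Function.Injective (fun m => xM m - yM m))
    (ι : M →+ H)
    (hιx : ∀ e, ι (xM e) = x1 • ι e) (hιy : ∀ e, ι (yM e) = y • ι e)
    (e1 e2 : M) (ξ : H)
    (hmem : (∃ e', e1 - e2 = xM e' - yM e') ∧
      (∃ ξ₁, ξ = ι e1 + (x2 - y) • ξ₁) ∧
      (∃ ξ₂, ξ = (τ * (x1 - y)) • ι e2 + (x1 - y) • ξ₂)) :
    ∀ e' e'' e''' : M,
      e1 - e2 = xM e' - yM e' →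
      yM e1 - xM e2 = xM e'' - yM e'' →
      xM e1 - yM e2 = xM e''' - yM e''' →
      (xM e' - e'' = e1 ∧ yM e' - e'' = e2 ∧
        (x1 * τ) • ξ - (τ * x2) • ξ = ξ) ∧
      (e''' - yM e' = e1 ∧ e''' - xM e' = e2 ∧
        (τ * x1) • ξ - (x2 * τ) • ξ = ξ) := by
  intro e' e'' e''' hA hB hC
  have hs1 : (x1 * τ) • ξ - (τ * x2) • ξ = ξ := by
    rw [← sub_smul]
    have : x1 * τ - τ * x2 = 1 := by rw [h2]; abel
    rw [this, one_smul]
  have hs2 : (τ * x1) • ξ - (x2 * τ) • ξ = ξ := by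
    rw [← sub_smul]
    have : τ * x1 - x2 * τ = 1 := by rw [h1]; abel
    rw [this, one_smul]
  have hxA : xM (xM e') = (xM e1 - xM e2) + xM (yM e') := by
    have h := congrArg xM hA
    rw [map_sub, map_sub] at h
    rw [h]; abel
  have hyA : yM (xM e') = (yM e1 - yM e2) + yM (yM e') := by
    have h := congrArg yM hA
    rw [map_sub, map_sub] at h
    rw [h]; abel
  have he'' : e'' = xM e' - e1 := by
    apply hinjM
    show xM e'' - yM e'' = xM (xM e' - e1) - yM (xM e' - e1)
    rw [← hB, map_sub, map_sub, hxA, ← hMc]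
    abel
  have he''' : e''' = e1 + yM e' := by
    apply hinjM
    show xM e''' - yM e''' = xM (e1 + yM e') - yM (e1 + yM e')
    rw [← hC, map_add, map_add, hMc, hyA]
    abel
  refine ⟨⟨?_, ?_, hs1⟩, ⟨?_, ?_, hs2⟩⟩
  · rw [he'']; abel
  · rw [he'']
    have h := congrArg (fun t => e1 - t) hA
    simp only [sub_sub_cancel] at h
    rw [h]; abel
  · rw [he''']; abel
  · rw [he''']
    have h := congrArg (fun t => e1 - t) hA
    simp only [sub_sub_cancel] at h
    rw [h]; abel
end

section
/- Let (eee₁,…,eee₄) ∈ E³[y]^⊕4 satisfy eee₃ − eee₄ = y₁eee⁽¹⁾, eee₂ − eee₃ = y₂eee⁽²⁾, Eδ(eee₄) − eee₂ = y₁eee⁽³⁾, eee₁ − eee₂ = y₃eee⁽⁴⁾, eee₁ − δE(eee₃) = y₂eee⁽⁵⁾, eee₁ − δE∘Eδ(eee₁) = y₁eee⁽⁶⁾. Then there is a unique ēee ∈ E³[y] with eee⁽⁵⁾ − eee⁽²⁾ = y₃·ēee and eee⁽⁴⁾ − τE(eee₃) = y₂·ēee. -/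
/-- Existence and uniqueness of `ēee` for a quadruple satisfying the
`G₄`-type relations.  Here `M` plays the role of `E³[y]`, with linear operators
`x1, x2, x3` (the three `x`'s), `t1 = Eτ`, `t2 = τE`, and `ymap` (mult. by `y`);
`yᵢ = xᵢ - y` act injectively and satisfy the pairwise divisibility property
(from freeness of `E³` over `P₃`); `δE = t2 ∘ y₂` and `Eδ = t1 ∘ y₁` so that
`δE = y₃ ∘ t2 + 1` is the relevant nil affine Hecke identity. -/
theorem exists_unique_eeebar {k M : Type*} [Field k] [AddCommGroup M] [Module k M]
    (x1 x2 x3 t1 t2 ymap : M →ₗ[k] M)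
    (hinj1 : Function.Injective (fun m => x1 m - ymap m))
    (hinj2 : Function.Injective (fun m => x2 m - ymap m))
    (hinj3 : Function.Injective (fun m => x3 m - ymap m))
    (hcomm23 : ∀ m, (x2 (x3 m) - ymap (x3 m)) - (x2 (ymap m) - ymap (ymap m))
      = (x3 (x2 m) - ymap (x2 m)) - (x3 (ymap m) - ymap (ymap m)))
    (hdiv : ∀ m : M, (∃ a, m = x2 a - ymap a) → (∃ b, m = x3 b - ymap b) →
      ∃ c, m = x2 (x3 c - ymap c) - ymap (x3 c - ymap c))
    (hrel : ∀ m, t2 (x2 m - ymap m) = x3 (t2 m) - ymap (t2 m) + m)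
    (eee1 eee2 eee3 eee4 g1 g2 g3 g4 g5 g6 : M)
    (e1 : eee3 - eee4 = x1 g1 - ymap g1)
    (e2 : eee2 - eee3 = x2 g2 - ymap g2)
    (e3 : t1 (x1 eee4 - ymap eee4) - eee2 = x1 g3 - ymap g3)
    (e4 : eee1 - eee2 = x3 g4 - ymap g4)
    (e5 : eee1 - t2 (x2 eee3 - ymap eee3) = x2 g5 - ymap g5)
    (e6 : eee1 - t2 (x2 (t1 (x1 eee1 - ymap eee1))
            - ymap (t1 (x1 eee1 - ymap eee1))) = x1 g6 - ymap g6) :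
    ∃! b : M, g5 - g2 = x3 b - ymap b ∧ g4 - t2 eee3 = x2 b - ymap b := by

  have hr := hrel eee3
  have haux : x3 (t2 eee3) - ymap (t2 eee3) = t2 (x2 eee3 - ymap eee3) - eee3 := by
    rw [hr]; abel
  have key : x2 (g5 - g2) - ymap (g5 - g2) = x3 (g4 - t2 eee3) - ymap (g4 - t2 eee3) := by
    have h5 : x2 g5 - ymap g5 = eee1 - t2 (x2 eee3 - ymap eee3) := e5.symm
    have h2 : x2 g2 - ymap g2 = eee2 - eee3 := e2.symm
    have h4 : x3 g4 - ymap g4 = eee1 - eee2 := e4.symm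
    calc x2 (g5 - g2) - ymap (g5 - g2)
        = (x2 g5 - ymap g5) - (x2 g2 - ymap g2) := by simp only [map_sub]; abel
      _ = (x3 g4 - ymap g4) - (x3 (t2 eee3) - ymap (t2 eee3)) := by
          rw [h5, h2, h4, haux]; abel
      _ = x3 (g4 - t2 eee3) - ymap (g4 - t2 eee3) := by simp only [map_sub]; abel
  obtain ⟨c, hc⟩ := hdiv (x2 (g5 - g2) - ymap (g5 - g2))
    ⟨g5 - g2, rfl⟩ ⟨g4 - t2 eee3, key⟩
  have hb1 : g5 - g2 = x3 c - ymap c := hinj2 hc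
  have hcomm : x2 (x3 c - ymap c) - ymap (x3 c - ymap c)
      = x3 (x2 c - ymap c) - ymap (x2 c - ymap c) := by
    calc x2 (x3 c - ymap c) - ymap (x3 c - ymap c)
        = (x2 (x3 c) - ymap (x3 c)) - (x2 (ymap c) - ymap (ymap c)) := by
          simp only [map_sub]; abel
      _ = (x3 (x2 c) - ymap (x2 c)) - (x3 (ymap c) - ymap (ymap c)) := hcomm23 c
      _ = x3 (x2 c - ymap c) - ymap (x2 c - ymap c) := by
          simp only [map_sub]; abel
  have hb2 : g4 - t2 eee3 = x2 c - ymap c := by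
    apply hinj3
    simp only [← key, hc, hcomm]
  refine ⟨c, ⟨hb1, hb2⟩, fun b hb => hinj3 ?_⟩
  simp only [← hb.1, hb1]
end
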